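/- For all integers m, n ≥ 1 and every truncation level K > 0, E[Q̃_n^m] ≤ Σ_{l=1}^{m} binom(m,l) (l K²/2)^{m−l} A_l(n). -/

import Mathlib

/-!
The self-intersection count is `Q = ∑ₓ C(l(x), 2)`, and on the event that all local times are at
most `K` each term `g x = C(l(x), 2)` is at most `M = K² / 2`. Multiplying the sum `P_l` of
`∏ₖ g (yₖ)` over injective `l`-tuples `y` by `∑ₓ g x`, a new point `x` either extends `y` to an
injective `(l+1)`-tuple or is one of the `l` points of `y`, so `(∑ g) P_l ≤ P_{l+1} + l M P_l`.
Iterating gives `(∑ g)^m ≤ ∑ₗ C(m,l) (l M)^(m-l) P_l` pointwise, and `E[P_l; sup l ≤ K] = A_l(n)`.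
The pointwise bound is integrated in `ℝ≥0∞`, where sums and integrals commute freely.
-/

open MeasureTheory ProbabilityTheory Finset
open scoped ENNReal

section InjectiveTuples

variable {α : Type*}

noncomputable def injTupleSum (g : α → ℝ≥0∞) (l : ℕ) : ℝ≥0∞ :=
  ∑' y : Fin l → α, {y : Fin l → α | Function.Injective y}.indicator (fun y => ∏ k, g (y k)) y

lemma injTupleSum_zero (g : α → ℝ≥0∞) : injTupleSum g 0 = 1 := by
  simp [injTupleSum, Function.injective_of_subsingleton]

lemma injTupleSum_succ (g : α → ℝ≥0∞) (l : ℕ) :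
    injTupleSum g (l + 1) = ∑' y : Fin l → α,
      {y : Fin l → α | Function.Injective y}.indicator (fun y => ∏ k, g (y k)) y *
        ∑' x, (Set.range y)ᶜ.indicator g x := by
  rw [injTupleSum, ← (Fin.consEquiv fun _ => α).tsum_eq, ENNReal.tsum_prod', ENNReal.tsum_comm]
  refine tsum_congr fun y => ?_
  rw [← ENNReal.tsum_mul_left]
  refine tsum_congr fun x => ?_
  by_cases hy : Function.Injective y <;> by_cases hx : x ∈ Set.range y <;>
    simp [Fin.consEquiv, Fin.cons_injective_iff, Fin.prod_univ_succ, hy, hx, mul_comm]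

lemma injTupleSum_succ_le (g : α → ℝ≥0∞) (l : ℕ) :
    injTupleSum g (l + 1) ≤ injTupleSum g l * ∑' x, g x := by
  rw [injTupleSum_succ, injTupleSum, ← ENNReal.tsum_mul_right]
  gcongr with y
  exact Set.indicator_le_self _ _ _

lemma injTupleSum_le_pow (g : α → ℝ≥0∞) (l : ℕ) : injTupleSum g l ≤ (∑' x, g x) ^ l := by
  induction l with
  | zero => rw [injTupleSum_zero, pow_zero]
  | succ l ih => exact (injTupleSum_succ_le g l).trans (by rw [pow_succ]; gcongr)

lemma tsum_mul_injTupleSum_le {g : α → ℝ≥0∞} {M : ℝ≥0∞} (hg : ∀ x, g x ≤ M) (l : ℕ) :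
    (∑' x, g x) * injTupleSum g l ≤ injTupleSum g (l + 1) + l * M * injTupleSum g l := by
  rw [injTupleSum_succ, injTupleSum, ← ENNReal.tsum_mul_left, ← ENNReal.tsum_mul_left,
    ← ENNReal.tsum_add]
  refine ENNReal.tsum_le_tsum fun y => ?_
  set P := {y : Fin l → α | Function.Injective y}.indicator (fun y => ∏ k, g (y k)) y
  by_cases hy : Function.Injective y
  · have hrange : ∑' x, (Set.range y).indicator g x ≤ l * M := by
      rw [← _root_.tsum_subtype, tsum_range g hy, tsum_fintype]
      simpa using Finset.sum_le_card_nsmul univ (fun k => g (y k)) M fun k _ => hg (y k)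
    calc (∑' x, g x) * P
        = P * ∑' x, (Set.range y)ᶜ.indicator g x + P * ∑' x, (Set.range y).indicator g x := by
          rw [← mul_add, ← ENNReal.tsum_add, mul_comm]
          simp_rw [add_comm ((Set.range y)ᶜ.indicator g _), Set.indicator_self_add_compl_apply]
      _ ≤ P * ∑' x, (Set.range y)ᶜ.indicator g x + l * M * P := by
          rw [mul_comm (l * M)]; gcongr
  · simp [P, hy]

lemma choose_mul_pow_add_choose_mul_pow_le (M : ℝ≥0∞) (m l : ℕ) :
    m.choose l * (l * M) ^ (m - l) + m.choose (l + 1) * ((l + 1 : ℕ) * M) ^ (m - (l + 1)) *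
      ((l + 1 : ℕ) * M) ≤ (m + 1).choose (l + 1) * ((l + 1 : ℕ) * M) ^ (m + 1 - (l + 1)) := by
  rw [Nat.choose_succ_succ', Nat.cast_add (m.choose l), add_mul (m.choose l : ℝ≥0∞),
    Nat.add_sub_add_right]
  refine add_le_add ?_ ?_
  · gcongr
    exact_mod_cast l.le_succ
  · rcases le_or_gt (l + 1) m with hlm | hml
    · rw [mul_assoc, ← pow_succ, Nat.sub_add_eq, Nat.sub_add_cancel (Nat.sub_pos_of_lt hlm)]
    · simp [Nat.choose_eq_zero_of_lt hml]

theorem tsum_pow_le_sum_choose_mul_injTupleSum {g : α → ℝ≥0∞} {M : ℝ≥0∞} (hg : ∀ x, g x ≤ M)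
    (m : ℕ) : (∑' x, g x) ^ m ≤
      ∑ l ∈ range (m + 1), m.choose l * (l * M) ^ (m - l) * injTupleSum g l := by
  induction m with
  | zero => simp [injTupleSum_zero]
  | succ m ih =>
    set c : ℕ → ℕ → ℝ≥0∞ := fun m l => m.choose l * (l * M) ^ (m - l)
    have hshift : ∑ l ∈ range (m + 1), c m l * (l * M * injTupleSum g l) =
        ∑ l ∈ range (m + 1), c m (l + 1) * ((l + 1 : ℕ) * M * injTupleSum g (l + 1)) := by
      rw [sum_range_succ', sum_range_succ]
      simp [c]
    calc (∑' x, g x) ^ (m + 1)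
        = (∑' x, g x) ^ m * ∑' x, g x := pow_succ _ _
      _ ≤ (∑ l ∈ range (m + 1), c m l * injTupleSum g l) * ∑' x, g x := by
          gcongr
      _ = ∑ l ∈ range (m + 1), c m l * ((∑' x, g x) * injTupleSum g l) := by
          rw [sum_mul]
          exact sum_congr rfl fun l _ => by ring
      _ ≤ ∑ l ∈ range (m + 1), c m l * (injTupleSum g (l + 1) + l * M * injTupleSum g l) := by
          gcongr with l
          exact tsum_mul_injTupleSum_le hg l
      _ = ∑ l ∈ range (m + 1), (c m l + c m (l + 1) * ((l + 1 : ℕ) * M)) *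
            injTupleSum g (l + 1) := by
          simp_rw [mul_add]
          rw [sum_add_distrib, hshift, ← sum_add_distrib]
          exact sum_congr rfl fun l _ => by ring
      _ ≤ ∑ l ∈ range (m + 1), c (m + 1) (l + 1) * injTupleSum g (l + 1) := by
          gcongr with l
          exact choose_mul_pow_add_choose_mul_pow_le M m l
      _ ≤ ∑ l ∈ range (m + 1 + 1), c (m + 1) l * injTupleSum g l := by
          rw [sum_range_succ' _ (m + 1)]
          exact le_self_add

end InjectiveTuples

section Path

variable {α : Type*} [DecidableEq α]

def localTime (s : ℕ → α) (n : ℕ) (x : α) : ℕ := #{k ∈ Icc 1 n | s k = x}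

def selfIntersectionCount (s : ℕ → α) (n : ℕ) : ℕ :=
  #{p ∈ Icc 1 n ×ˢ Icc 1 n | p.1 < p.2 ∧ s p.1 = s p.2}

lemma localTime_eq_zero {s : ℕ → α} {n : ℕ} {x : α} (hx : x ∉ (Icc 1 n).image s) :
    localTime s n x = 0 := by
  rw [localTime, card_eq_zero, filter_eq_empty_iff]
  exact fun k hk hkx => hx (mem_image.2 ⟨k, hk, hkx⟩)

lemma selfIntersectionCount_eq_sum_choose_two (s : ℕ → α) (n : ℕ) :
    selfIntersectionCount s n = ∑ x ∈ (Icc 1 n).image s, (localTime s n x).choose 2 := by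
  rw [selfIntersectionCount, card_eq_sum_card_fiberwise (f := fun p => s p.1)
    fun p hp => mem_image_of_mem s (mem_product.1 (mem_filter.1 hp).1).1]
  refine sum_congr rfl fun x _ => ?_
  rw [localTime, ← card_product_filter_lt]
  congr 1
  ext ⟨j, k⟩
  simp only [mem_filter, mem_product]
  grind

lemma tsum_choose_two_localTime (s : ℕ → α) (n : ℕ) :
    ∑' x, ((localTime s n x).choose 2 : ℝ≥0∞) = selfIntersectionCount s n := by
  rw [tsum_eq_sum (s := (Icc 1 n).image s) fun x hx => by simp [localTime_eq_zero hx],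
    selfIntersectionCount_eq_sum_choose_two, Nat.cast_sum]

lemma selfIntersectionCount_le (s : ℕ → α) (n : ℕ) : selfIntersectionCount s n ≤ n * n :=
  (card_filter_le _ _).trans (by simp)

lemma cast_selfIntersectionCount (s : ℕ → α) (n : ℕ) :
    (selfIntersectionCount s n : ℝ) =
      ∑ j ∈ Icc 1 n, ∑ k ∈ Icc 1 n, if j < k ∧ s j = s k then 1 else 0 := by
  rw [selfIntersectionCount, card_filter, sum_product]
  push_cast
  rfl

theorem selfIntersectionCount_pow_le {s : ℕ → α} {n m : ℕ} (hm : 1 ≤ m) {K : ℝ}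
    (hK : ∀ x, (localTime s n x : ℝ) ≤ K) :
    (selfIntersectionCount s n : ℝ≥0∞) ^ m ≤ ∑ l ∈ Icc 1 m,
      ENNReal.ofReal (m.choose l * (l * K ^ 2 / 2) ^ (m - l)) *
        injTupleSum (fun x => ((localTime s n x).choose 2 : ℝ≥0∞)) l := by
  have hchoose : ∀ x, ((localTime s n x).choose 2 : ℝ≥0∞) ≤ ENNReal.ofReal (K ^ 2 / 2) := by
    intro x
    have h0 : (0 : ℝ) ≤ localTime s n x := Nat.cast_nonneg _
    rw [← ENNReal.ofReal_natCast, Nat.cast_choose_two]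
    exact ENNReal.ofReal_le_ofReal (by nlinarith [hK x])
  rw [← tsum_choose_two_localTime]
  refine (tsum_pow_le_sum_choose_mul_injTupleSum hchoose m).trans_eq ?_
  rw [range_eq_Ico, sum_eq_sum_Ico_succ_bot (by omega), zero_add, Ico_add_one_right_eq_Icc]
  simp only [Nat.cast_zero, zero_mul, zero_pow (by omega : m - 0 ≠ 0), mul_zero, zero_add]
  refine sum_congr rfl fun l _ => ?_
  rw [ENNReal.ofReal_mul (by positivity), ENNReal.ofReal_natCast,
    ENNReal.ofReal_pow (by positivity), mul_div_assoc, ENNReal.ofReal_mul (by positivity),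
    ENNReal.ofReal_natCast]

end Path

section Measurability

variable {α : Type*} [DecidableEq α] [MeasurableSpace α]

lemma measurable_localTime [MeasurableSingletonClass α] (n : ℕ) (x : α) :
    Measurable fun s : ℕ → α => localTime s n x := by
  simp_rw [localTime, card_filter]
  exact Finset.measurable_sum _ fun k _ =>
    Measurable.ite ((measurableSet_singleton x).preimage (measurable_pi_apply k))
      measurable_const measurable_const

lemma measurable_selfIntersectionCount [MeasurableEq α] (n : ℕ) :
    Measurable fun s : ℕ → α => selfIntersectionCount s n := by
  simp_rw [selfIntersectionCount, card_filter]
  refine Finset.measurable_sum _ fun p _ => Measurable.ite ?_ measurable_const measurable_const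
  exact (MeasurableSet.const _).inter
    (measurableSet_eq_fun (measurable_pi_apply p.1) (measurable_pi_apply p.2))

end Measurability

lemma tsum_integral_eq_toReal_lintegral_tsum {Ω ι : Type*} [MeasurableSpace Ω] [Countable ι]
    {μ : Measure Ω} {f : ι → Ω → ℝ} (hf : ∀ i, AEStronglyMeasurable (f i) μ) (hf0 : ∀ i, 0 ≤ f i)
    (hfin : ∫⁻ ω, ∑' i, ENNReal.ofReal (f i ω) ∂μ ≠ ∞) :
    ∑' i, ∫ ω, f i ω ∂μ = (∫⁻ ω, ∑' i, ENNReal.ofReal (f i ω) ∂μ).toReal := by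
  rw [lintegral_tsum fun i => (hf i).aemeasurable.ennreal_ofReal] at hfin ⊢
  rw [ENNReal.tsum_toReal_eq (ENNReal.ne_top_of_tsum_ne_top hfin)]
  exact tsum_congr fun i => integral_eq_lintegral_of_nonneg_ae (ae_of_all _ (hf0 i)) (hf i)

section TruncatedMoments

variable {Ω α : Type*} [DecidableEq α]

def localTimeBounded (S : ℕ → Ω → α) (n : ℕ) (K : ℝ) : Set Ω :=
  {ω | ∀ x, (localTime (S · ω) n x : ℝ) ≤ K}

/-- The paper's `A_l(n)`. -/
noncomputable def truncatedPairMoment [MeasurableSpace Ω] (μ : Measure Ω) (S : ℕ → Ω → α)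
    (l n : ℕ) (K : ℝ) : ℝ :=
  (2 : ℝ)⁻¹ ^ l * ∑' y : Fin l → α, {y : Fin l → α | Function.Injective y}.indicator
    (fun y => ∫ ω, (localTimeBounded S n K).indicator (fun ω => ∏ k,
      ((localTime (S · ω) n (y k) : ℝ) * ((localTime (S · ω) n (y k) : ℝ) - 1))) ω ∂μ) y

/-- The integrand of `truncatedPairMoment`, with the factor `2⁻¹ ^ l` absorbed through
`l (l - 1) / 2 = C(l, 2)`. -/
noncomputable def truncatedPairProduct (S : ℕ → Ω → α) (n : ℕ) (K : ℝ) {l : ℕ} (y : Fin l → α)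
    (ω : Ω) : ℝ :=
  {y : Fin l → α | Function.Injective y}.indicator (fun y => (localTimeBounded S n K).indicator
    (fun ω => ∏ k, ((localTime (S · ω) n (y k)).choose 2 : ℝ)) ω) y

lemma truncatedPairMoment_eq_tsum_integral [MeasurableSpace Ω] (μ : Measure Ω) (S : ℕ → Ω → α)
    (l n : ℕ) (K : ℝ) :
    truncatedPairMoment μ S l n K = ∑' y : Fin l → α, ∫ ω, truncatedPairProduct S n K y ω ∂μ := by
  rw [truncatedPairMoment, ← tsum_mul_left]
  refine tsum_congr fun y => ?_
  by_cases hy : Function.Injective y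
  · simp only [truncatedPairProduct, ← integral_const_mul,
      Set.indicator_of_mem (show y ∈ {y | Function.Injective y} from hy)]
    refine integral_congr_ae (ae_of_all _ fun ω => ?_)
    by_cases hω : ω ∈ localTimeBounded S n K
    · simp [hω, Nat.cast_choose_two, div_eq_mul_inv, mul_comm, prod_mul_distrib]
    · simp [hω]
  · simp [truncatedPairProduct, hy]

lemma tsum_ofReal_truncatedPairProduct (S : ℕ → Ω → α) (l n : ℕ) (K : ℝ) (ω : Ω) :
    ∑' y : Fin l → α, ENNReal.ofReal (truncatedPairProduct S n K y ω) =
      (localTimeBounded S n K).indicator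
        (fun ω => injTupleSum (fun x => ((localTime (S · ω) n x).choose 2 : ℝ≥0∞)) l) ω := by
  by_cases hω : ω ∈ localTimeBounded S n K
  · rw [Set.indicator_of_mem hω, injTupleSum]
    refine tsum_congr fun y => ?_
    by_cases hy : Function.Injective y
    · simp [truncatedPairProduct, hy, hω, ENNReal.ofReal_prod_of_nonneg]
    · simp [truncatedPairProduct, hy]
  · simp [truncatedPairProduct, hω]

lemma lintegral_indicator_injTupleSum_ne_top [MeasurableSpace Ω] (μ : Measure Ω)
    [IsFiniteMeasure μ] (S : ℕ → Ω → α) (l n : ℕ) (K : ℝ) :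
    ∫⁻ ω, (localTimeBounded S n K).indicator
      (fun ω => injTupleSum (fun x => ((localTime (S · ω) n x).choose 2 : ℝ≥0∞)) l) ω ∂μ ≠ ∞ := by
  refine ne_top_of_le_ne_top (lintegral_const_lt_top (μ := μ) (c := ((n * n : ℕ) : ℝ≥0∞) ^ l)
    (ENNReal.pow_ne_top (ENNReal.natCast_ne_top _))).ne (lintegral_mono fun ω => ?_)
  calc _ ≤ injTupleSum (fun x => ((localTime (S · ω) n x).choose 2 : ℝ≥0∞)) l :=
        Set.indicator_le_self (localTimeBounded S n K) _ ω
    _ ≤ (selfIntersectionCount (S · ω) n : ℝ≥0∞) ^ l := by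
        rw [← tsum_choose_two_localTime]; exact injTupleSum_le_pow _ l
    _ ≤ ((n * n : ℕ) : ℝ≥0∞) ^ l := by gcongr; exact_mod_cast selfIntersectionCount_le _ n

end TruncatedMoments

section Integration

variable {Ω α : Type*} [MeasurableSpace Ω] [DecidableEq α] [MeasurableSpace α]
  [MeasurableSingletonClass α] {S : ℕ → Ω → α}

lemma measurableSet_localTimeBounded [Countable α] (hS : ∀ k, Measurable (S k)) (n : ℕ) (K : ℝ) :
    MeasurableSet (localTimeBounded S n K) := by
  simp_rw [localTimeBounded, Set.ofPred_forall]
  exact MeasurableSet.iInter fun x => measurableSet_le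
    (Measurable.of_discrete.comp ((measurable_localTime n x).comp (measurable_pi_lambda _ hS)))
    measurable_const

lemma measurable_truncatedPairProduct [Countable α] (hS : ∀ k, Measurable (S k)) (n : ℕ) (K : ℝ)
    {l : ℕ} (y : Fin l → α) : Measurable (truncatedPairProduct S n K y) := by
  unfold truncatedPairProduct
  by_cases hy : Function.Injective y
  · simp only [Set.indicator_of_mem (show y ∈ {y | Function.Injective y} from hy)]
    refine Measurable.indicator (Finset.measurable_prod _ fun k _ => ?_)
      (measurableSet_localTimeBounded hS n K)
    exact (Measurable.of_discrete (f := fun c : ℕ => (c.choose 2 : ℝ))).comp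
      ((measurable_localTime n (y k)).comp (measurable_pi_lambda _ hS))
  · simp only [Set.indicator_of_notMem (show y ∉ {y | Function.Injective y} from hy)]
    exact measurable_const

lemma truncatedPairMoment_eq_toReal_lintegral [Countable α] (μ : Measure Ω) [IsFiniteMeasure μ]
    (hS : ∀ k, Measurable (S k)) (l n : ℕ) (K : ℝ) :
    truncatedPairMoment μ S l n K = (∫⁻ ω, (localTimeBounded S n K).indicator (fun ω =>
      injTupleSum (fun x => ((localTime (S · ω) n x).choose 2 : ℝ≥0∞)) l) ω ∂μ).toReal := by
  have hnonneg : ∀ (y : Fin l → α), 0 ≤ truncatedPairProduct S n K y := fun y ω =>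
    Set.indicator_nonneg (fun _ _ => Set.indicator_nonneg (fun _ _ => by positivity) _) _
  have hfin := lintegral_indicator_injTupleSum_ne_top μ S l n K
  simp_rw [← tsum_ofReal_truncatedPairProduct] at hfin ⊢
  rw [truncatedPairMoment_eq_tsum_integral]
  exact tsum_integral_eq_toReal_lintegral_tsum
    (fun y => (measurable_truncatedPairProduct hS n K y).aestronglyMeasurable) hnonneg hfin

theorem integral_indicator_selfIntersectionCount_pow_le [Countable α] (μ : Measure Ω)
    [IsFiniteMeasure μ] (hS : ∀ k, Measurable (S k)) {m : ℕ} (hm : 1 ≤ m) (n : ℕ) (K : ℝ) :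
    ∫ ω, ((localTimeBounded S n K).indicator
        (fun ω => (selfIntersectionCount (S · ω) n : ℝ)) ω) ^ m ∂μ ≤
      ∑ l ∈ Icc 1 m, (m.choose l : ℝ) * ((l : ℝ) * K ^ 2 / 2) ^ (m - l) *
        truncatedPairMoment μ S l n K := by
  set E := localTimeBounded S n K
  set P : ℕ → Ω → ℝ≥0∞ := fun l ω =>
    E.indicator (fun ω => injTupleSum (fun x => ((localTime (S · ω) n x).choose 2 : ℝ≥0∞)) l) ω
  set c : ℕ → ℝ := fun l => (m.choose l : ℝ) * ((l : ℝ) * K ^ 2 / 2) ^ (m - l)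
  have hpath : Measurable fun ω k => S k ω := measurable_pi_lambda _ hS
  have hpointwise : ∀ ω, ENNReal.ofReal ((E.indicator
      (fun ω => (selfIntersectionCount (S · ω) n : ℝ)) ω) ^ m) ≤
        ∑ l ∈ Icc 1 m, ENNReal.ofReal (c l) * P l ω := by
    intro ω
    by_cases hω : ω ∈ E
    · simp only [P, Set.indicator_of_mem hω]
      rw [ENNReal.ofReal_pow (Nat.cast_nonneg _), ENNReal.ofReal_natCast]
      exact selfIntersectionCount_pow_le hm hω
    · simp [hω, zero_pow (by omega : m ≠ 0)]
  have hP : ∀ l, Measurable (P l) := fun l => by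
    rw [show P l = _ from funext fun ω => (tsum_ofReal_truncatedPairProduct S l n K ω).symm]
    exact Measurable.tsum fun y => (measurable_truncatedPairProduct hS n K y).ennreal_ofReal
  have hfin : ∀ l ∈ Icc 1 m, ENNReal.ofReal (c l) * ∫⁻ ω, P l ω ∂μ ≠ ∞ := fun l _ =>
    ENNReal.mul_ne_top ENNReal.ofReal_ne_top (lintegral_indicator_injTupleSum_ne_top μ S l n K)
  have hQ : Measurable (E.indicator fun ω => (selfIntersectionCount (S · ω) n : ℝ)) :=
    (Measurable.of_discrete.comp ((measurable_selfIntersectionCount n).comp hpath)).indicator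
      (measurableSet_localTimeBounded hS n K)
  calc _ = (∫⁻ ω, ENNReal.ofReal ((E.indicator
          (fun ω => (selfIntersectionCount (S · ω) n : ℝ)) ω) ^ m) ∂μ).toReal :=
        integral_eq_lintegral_of_nonneg_ae
          (ae_of_all _ fun ω => pow_nonneg (Set.indicator_nonneg (fun _ _ => by positivity) ω) m)
          (hQ.pow_const m).aestronglyMeasurable
    _ ≤ (∑ l ∈ Icc 1 m, ENNReal.ofReal (c l) * ∫⁻ ω, P l ω ∂μ).toReal := by
        refine ENNReal.toReal_mono (ENNReal.sum_ne_top.2 hfin)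
          ((lintegral_mono hpointwise).trans_eq ?_)
        rw [lintegral_finsetSum _ fun l _ => (hP l).const_mul _]
        simp_rw [lintegral_const_mul _ (hP _)]
    _ = ∑ l ∈ Icc 1 m, c l * truncatedPairMoment μ S l n K := by
        rw [ENNReal.toReal_sum hfin]
        refine sum_congr rfl fun l _ => ?_
        rw [ENNReal.toReal_mul, ENNReal.toReal_ofReal (by positivity),
          truncatedPairMoment_eq_toReal_lintegral μ hS]

end Integration

theorem truncated_self_intersection_moment_upper_bound_general
    {Ω : Type*} [MeasurableSpace Ω] (μ : Measure Ω) [IsProbabilityMeasure μ]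
    (d : ℕ)
    (X : ℕ → Ω → (Fin d → ℤ))
    (hXmeas : ∀ i, Measurable (X i))
    (S : ℕ → Ω → (Fin d → ℤ)) (hS : ∀ n ω, S n ω = ∑ i ∈ Finset.range n, X (i + 1) ω)
    (Q : ℕ → Ω → ℝ)
    (hQ : ∀ n ω, Q n ω = ∑ j ∈ Finset.Icc 1 n, ∑ k ∈ Finset.Icc 1 n,
        if j < k ∧ S j ω = S k ω then (1 : ℝ) else 0)
    (lt : ℕ → (Fin d → ℤ) → Ω → ℕ)
    (hlt : ∀ n x ω, lt n x ω = ((Finset.Icc 1 n).filter (fun k => S k ω = x)).card)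
    (Qt : ℕ → ℝ → Ω → ℝ)
    (hQt : ∀ n K, Qt n K = Set.indicator {ω | ∀ x, (lt n x ω : ℝ) ≤ K} (Q n))
    (A : ℕ → ℕ → ℝ → ℝ)
    (hA : ∀ m n K, A m n K = (2 : ℝ)⁻¹ ^ m * ∑' y : Fin m → (Fin d → ℤ),
      Set.indicator {y : Fin m → (Fin d → ℤ) | Function.Injective y}
        (fun y => ∫ ω, Set.indicator {ω' | ∀ x, (lt n x ω' : ℝ) ≤ K}
          (fun ω' => ∏ k : Fin m, ((lt n (y k) ω' : ℝ) * ((lt n (y k) ω' : ℝ) - 1))) ω ∂μ) y) :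
    ∀ m n : ℕ, 1 ≤ m → 1 ≤ n → ∀ K : ℝ, 0 < K →
      ∫ ω, (Qt n K ω) ^ m ∂μ ≤
        ∑ l ∈ Finset.Icc 1 m, (m.choose l : ℝ) * ((l : ℝ) * K ^ 2 / 2) ^ (m - l) * A l n K := by
  intro m n hm _ K _
  obtain rfl : lt = fun n x ω => localTime (S · ω) n x := funext₃ hlt
  obtain rfl : Q = fun n ω => (selfIntersectionCount (S · ω) n : ℝ) :=
    funext₂ fun n ω => (hQ n ω).trans (cast_selfIntersectionCount _ n).symm
  obtain rfl := funext₂ hQt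
  obtain rfl := funext₃ hA
  have hSmeas : ∀ k, Measurable (S k) := fun k => by
    rw [funext (hS k)]
    exact Finset.measurable_sum _ fun i _ => hXmeas (i + 1)
  exact integral_indicator_selfIntersectionCount_pow_le μ hSmeas hm n K

/-- **Upper bound on moments of the truncated self-intersection local time
(Proposition 2.1, inequality (2.9)):**
`E[Q̃_n^m] ≤ Σ_{l=1}^m binom(m,l) (l K²/2)^{m−l} A_l(n)`. -/
theorem truncated_self_intersection_moment_upper_bound
    {Ω : Type*} [MeasurableSpace Ω] (μ : Measure Ω) [IsProbabilityMeasure μ]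
    (d : ℕ) (hd : 1 ≤ d)
    (X : ℕ → Ω → (Fin d → ℤ))
    (hXmeas : ∀ i, Measurable (X i))
    (hXindep : iIndepFun X μ)
    (hXident : ∀ i, Measure.map (X i) μ = Measure.map (X 1) μ)
    (hXsymm : Measure.map (X 1) μ = Measure.map (fun ω => -(X 1 ω)) μ)
    (hXsupp : AddSubgroup.closure {x : Fin d → ℤ | μ {ω | X 1 ω = x} ≠ 0} = ⊤)
    (hXmom : ∀ a b : Fin d, Integrable (fun ω => ((X 1 ω a : ℝ) * (X 1 ω b : ℝ))) μ)
    (S : ℕ → Ω → (Fin d → ℤ)) (hS : ∀ n ω, S n ω = ∑ i ∈ Finset.range n, X (i + 1) ω)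
    (Q : ℕ → Ω → ℝ)
    (hQ : ∀ n ω, Q n ω = ∑ j ∈ Finset.Icc 1 n, ∑ k ∈ Finset.Icc 1 n,
        if j < k ∧ S j ω = S k ω then (1 : ℝ) else 0)
    (lt : ℕ → (Fin d → ℤ) → Ω → ℕ)
    (hlt : ∀ n x ω, lt n x ω = ((Finset.Icc 1 n).filter (fun k => S k ω = x)).card)
    (Qt : ℕ → ℝ → Ω → ℝ)
    (hQt : ∀ n K, Qt n K = Set.indicator {ω | ∀ x, (lt n x ω : ℝ) ≤ K} (Q n))
    (A : ℕ → ℕ → ℝ → ℝ)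
    (hA : ∀ m n K, A m n K = (2 : ℝ)⁻¹ ^ m * ∑' y : Fin m → (Fin d → ℤ),
      Set.indicator {y : Fin m → (Fin d → ℤ) | Function.Injective y}
        (fun y => ∫ ω, Set.indicator {ω' | ∀ x, (lt n x ω' : ℝ) ≤ K}
          (fun ω' => ∏ k : Fin m, ((lt n (y k) ω' : ℝ) * ((lt n (y k) ω' : ℝ) - 1))) ω ∂μ) y) :
    ∀ m n : ℕ, 1 ≤ m → 1 ≤ n → ∀ K : ℝ, 0 < K →
      ∫ ω, (Qt n K ω) ^ m ∂μ ≤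
        ∑ l ∈ Finset.Icc 1 m, (m.choose l : ℝ) * ((l : ℝ) * K ^ 2 / 2) ^ (m - l) * A l n K :=
  truncated_self_intersection_moment_upper_bound_general μ d X hXmeas S hS Q hQ lt hlt Qt hQt A hA
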